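/- arXiv:1210.7673 — 5 statements merged into one kernel-verified Lean document; each statement's English description precedes it below -/
import Mathlib

section
/- Let H be a complex Hadamard matrix of even order d whose columns C_1, C_2 satisfy (C_1)_k = a_k and (C_2)_k = (-1)^k a_k with |a_k| = 1. For ξ ∈ ℝ, define C_1(ξ)_k = e^{i(-1)^k ξ} a_k and C_2(ξ)_k = (-1)^k e^{i(-1)^k ξ} a_k. Then the matrix H(ξ) obtained from H by replacing columns C_1, C_2 with C_1(ξ), C_2(ξ) is a complex Hadamard matrix for every ξ. -/
open Complex Finset

/-- A complex Hadamard matrix: unimodular entries and pairwise orthogonal columns. -/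
def IsCHM {d : ℕ} (H : Matrix (Fin d) (Fin d) ℂ) : Prop :=
  (∀ i j, ‖H i j‖ = 1) ∧
  ∀ j k, j ≠ k → ∑ i, (starRingEnd ℂ) (H i j) * H i k = 0

/-!
Since `e^{±iξ} = cos ξ ± i sin ξ`, the deformed columns are `cos ξ · C₁ + i sin ξ · C₂` and
`i sin ξ · C₁ + cos ξ · C₂`. Any mixing `c C₁ + s C₂`, `s C₁ + c C₂` of two orthogonal columns of
equal norm with `Re (c̄ s) = 0` keeps them orthogonal to each other and to every column orthogonal
to both; the columns of a matrix with unimodular entries all have squared norm equal to the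
number of rows.
-/

namespace Matrix

variable {m n : Type*}

section dotProduct

variable [Fintype m]

lemma star_dotProduct_eq_zero_comm {u v : m → ℂ} : star u ⬝ᵥ v = 0 ↔ star v ⬝ᵥ u = 0 := by
  rw [star_dotProduct, star_eq_zero]

lemma star_dotProduct_add_smul_eq_zero {u v w : m → ℂ} (hu : star w ⬝ᵥ u = 0)
    (hv : star w ⬝ᵥ v = 0) (α β : ℂ) : star w ⬝ᵥ (α • u + β • v) = 0 := by
  simp [dotProduct_add, dotProduct_smul, hu, hv]

lemma star_dotProduct_mix_eq_zero {u v : m → ℂ} (huv : star u ⬝ᵥ v = 0)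
    (hnorm : star u ⬝ᵥ u = star v ⬝ᵥ v) {c s : ℂ} (hcs : star c * s + star s * c = 0) :
    star (c • u + s • v) ⬝ᵥ (s • u + c • v) = 0 := by
  have hvu : star v ⬝ᵥ u = 0 := star_dotProduct_eq_zero_comm.1 huv
  simp only [star_add, star_smul, dotProduct_add, add_dotProduct, dotProduct_smul,
    smul_dotProduct, huv, hvu, ← hnorm, smul_eq_mul, mul_zero, add_zero, zero_add]
  linear_combination (star u ⬝ᵥ u) * hcs

lemma star_col_dotProduct_self_of_norm_eq_one {H : Matrix m n ℂ} {j : n}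
    (h : ∀ i, ‖H i j‖ = 1) : star (Hᵀ j) ⬝ᵥ Hᵀ j = Fintype.card m := by
  simp [dotProduct, ← starRingEnd_apply, conj_mul', h]

end dotProduct

section mixCols

variable [DecidableEq n]

def mixCols (H : Matrix m n ℂ) (c₁ c₂ : n) (c s : ℂ) : Matrix m n ℂ :=
  fun i j => if j = c₁ then c * H i c₁ + s * H i c₂
    else if j = c₂ then s * H i c₁ + c * H i c₂ else H i j

variable {H : Matrix m n ℂ} {c₁ c₂ : n} {c s : ℂ}

lemma mixCols_col_left : (mixCols H c₁ c₂ c s)ᵀ c₁ = c • Hᵀ c₁ + s • Hᵀ c₂ := by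
  ext i; simp [mixCols]

lemma mixCols_col_right (h : c₁ ≠ c₂) : (mixCols H c₁ c₂ c s)ᵀ c₂ = s • Hᵀ c₁ + c • Hᵀ c₂ := by
  ext i; simp [mixCols, h.symm]

lemma mixCols_col_of_ne {j : n} (h₁ : j ≠ c₁) (h₂ : j ≠ c₂) : (mixCols H c₁ c₂ c s)ᵀ j = Hᵀ j := by
  ext i; simp [mixCols, h₁, h₂]

theorem mixCols_cols_orthogonal [Fintype m] (hH : ∀ j k, j ≠ k → star (Hᵀ j) ⬝ᵥ Hᵀ k = 0)
    (hnorm : star (Hᵀ c₁) ⬝ᵥ Hᵀ c₁ = star (Hᵀ c₂) ⬝ᵥ Hᵀ c₂) (hne : c₁ ≠ c₂)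
    (hcs : star c * s + star s * c = 0) :
    ∀ j k, j ≠ k → star ((mixCols H c₁ c₂ c s)ᵀ j) ⬝ᵥ (mixCols H c₁ c₂ c s)ᵀ k = 0 := by
  have hpair : star ((mixCols H c₁ c₂ c s)ᵀ c₁) ⬝ᵥ (mixCols H c₁ c₂ c s)ᵀ c₂ = 0 := by
    rw [mixCols_col_left, mixCols_col_right hne]
    exact star_dotProduct_mix_eq_zero (hH _ _ hne) hnorm hcs
  have hfixed : ∀ j k, j ≠ k → k ≠ c₁ → k ≠ c₂ →
      star ((mixCols H c₁ c₂ c s)ᵀ k) ⬝ᵥ (mixCols H c₁ c₂ c s)ᵀ j = 0 := by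
    intro j k hjk hk₁ hk₂
    rw [mixCols_col_of_ne hk₁ hk₂]
    by_cases hj₁ : j = c₁
    · subst hj₁
      rw [mixCols_col_left]
      exact star_dotProduct_add_smul_eq_zero (hH _ _ hk₁) (hH _ _ hk₂) _ _
    by_cases hj₂ : j = c₂
    · subst hj₂
      rw [mixCols_col_right hne]
      exact star_dotProduct_add_smul_eq_zero (hH _ _ hk₁) (hH _ _ hk₂) _ _
    rw [mixCols_col_of_ne hj₁ hj₂]
    exact hH _ _ hjk.symm
  intro j k hjk
  by_cases hk : k ≠ c₁ ∧ k ≠ c₂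
  · exact star_dotProduct_eq_zero_comm.1 (hfixed j k hjk hk.1 hk.2)
  by_cases hj : j ≠ c₁ ∧ j ≠ c₂
  · exact hfixed k j hjk.symm hj.1 hj.2
  rw [not_and_or, not_ne_iff, not_ne_iff] at hj hk
  rcases hj with rfl | rfl <;> rcases hk with rfl | rfl
  · exact absurd rfl hjk
  · exact hpair
  · exact star_dotProduct_eq_zero_comm.1 hpair
  · exact absurd rfl hjk

end mixCols

end Matrix

open Matrix

lemma exp_I_mul_neg_one_pow_mul (k : ℕ) (x : ℂ) :
    exp (I * (-1) ^ k * x) = cos x + (-1) ^ k * (I * sin x) := by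
  rcases Nat.even_or_odd k with hk | hk
  · rw [hk.neg_one_pow, mul_one, mul_comm, exp_mul_I]
    ring
  · rw [hk.neg_one_pow, show I * -1 * x = -x * I by ring, exp_mul_I, cos_neg, sin_neg]
    ring

lemma norm_exp_I_mul_neg_one_pow_mul (k : ℕ) (x : ℝ) : ‖exp (I * (-1) ^ k * x)‖ = 1 := by
  rw [mul_assoc, ← norm_exp_I_mul_ofReal ((-1) ^ k * x)]
  push_cast
  rfl

theorem ER_deformation_is_hadamard_general (d : ℕ)
    (H : Matrix (Fin d) (Fin d) ℂ) (hH : IsCHM H)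
    (c1 c2 : Fin d) (hne : c1 ≠ c2) (a : Fin d → ℂ)
    (ha : ∀ k, ‖a k‖ = 1)
    (h1 : ∀ k, H k c1 = a k)
    (h2 : ∀ k, H k c2 = (-1 : ℂ) ^ (k : ℕ) * a k)
    (ξ : ℝ) (H' : Matrix (Fin d) (Fin d) ℂ)
    (hH' : ∀ j k, H' j k =
      if k = c1 then Complex.exp (Complex.I * (-1 : ℂ) ^ (j : ℕ) * (ξ : ℂ)) * a j
      else if k = c2 then
        (-1 : ℂ) ^ (j : ℕ) * Complex.exp (Complex.I * (-1 : ℂ) ^ (j : ℕ) * (ξ : ℂ)) * a j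
      else H j k) :
    IsCHM H' := by
  obtain ⟨hunit, horth⟩ := hH
  have hmix : H' = mixCols H c1 c2 (cos ξ) (I * sin ξ) := by
    ext j k
    have hsq : ((-1 : ℂ) ^ (j : ℕ)) ^ 2 = 1 := by
      rw [← pow_mul, mul_comm, pow_mul, neg_one_sq, one_pow]
    rw [hH', mixCols, h1, h2, exp_I_mul_neg_one_pow_mul]
    split_ifs
    · ring
    · linear_combination I * sin ξ * a j * hsq
    · rfl
  refine ⟨fun j k => ?_, ?_⟩
  · rw [hH']
    split_ifs <;> simp [norm_exp_I_mul_neg_one_pow_mul, ha, hunit]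
  · have hcs : star (cos (ξ : ℂ)) * (I * sin ξ) + star (I * sin ξ) * cos ξ = 0 := by
      rw [← ofReal_cos, ← ofReal_sin]
      simp only [star_mul', Complex.star_def, conj_I, conj_ofReal]
      ring
    rw [hmix]
    exact mixCols_cols_orthogonal horth
      ((star_col_dotProduct_self_of_norm_eq_one (hunit · c1)).trans
        (star_col_dotProduct_self_of_norm_eq_one (hunit · c2)).symm) hne hcs

/-- deforming an ER pair of columns of a complex Hadamard matrix of even
order by the phases `e^{i(-1)^k ξ}` yields a complex Hadamard matrix for every `ξ`. -/
theorem ER_deformation_is_hadamard (d : ℕ) (hd : Even d)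
    (H : Matrix (Fin d) (Fin d) ℂ) (hH : IsCHM H)
    (c1 c2 : Fin d) (hne : c1 ≠ c2) (a : Fin d → ℂ)
    (ha : ∀ k, ‖a k‖ = 1)
    (h1 : ∀ k, H k c1 = a k)
    (h2 : ∀ k, H k c2 = (-1 : ℂ) ^ (k : ℕ) * a k)
    (ξ : ℝ) (H' : Matrix (Fin d) (Fin d) ℂ)
    (hH' : ∀ j k, H' j k =
      if k = c1 then Complex.exp (Complex.I * (-1 : ℂ) ^ (j : ℕ) * (ξ : ℂ)) * a j
      else if k = c2 then
        (-1 : ℂ) ^ (j : ℕ) * Complex.exp (Complex.I * (-1 : ℂ) ^ (j : ℕ) * (ξ : ℂ)) * a j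
      else H j k) :
    IsCHM H' :=
  ER_deformation_is_hadamard_general d H hH c1 c2 hne a ha h1 h2 ξ H' hH'
end

section
/- Let H be a d×d complex Hadamard matrix (d even) possessing d/2 pairwise disjoint aligned ER pairs of columns and d/2 pairwise disjoint aligned ER pairs of rows, where aligned means the sign patterns (C_1)_k^* (C_2)_k agree across all column pairs. Then, after suitable row and column permutations, H has the block form [[A, B],[A, -B]] where A and B are (d/2)×(d/2) complex Hadamard matrices. -/
/-!
The row pairs say `H (r (i, true)) = δ ⊙ H (r (i, false))` with `δ = ±1`. Orthogonality of the
two rows of one pair gives `∑ δ = 0`, so `δ = 1` on exactly half of the columns. For two columns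
on which `δ` takes the same value, the lower rows contribute to their inner product exactly what
the upper rows do, so the upper halves are already orthogonal: the columns with `δ = 1` give `A`,
those with `δ = -1` give `B`.
-/

open Complex Finset

open ComplexConjugate
open scoped Matrix

lemma Complex.conj_mul_self_of_norm_eq_one {z : ℂ} (hz : ‖z‖ = 1) : conj z * z = 1 := by
  rw [conj_mul', hz]
  norm_num

lemma Complex.eq_mul_of_conj_mul_eq {a b s : ℂ} (ha : ‖a‖ = 1) (h : conj a * b = s) :
    b = s * a := by
  linear_combination a * h - b * conj_mul_self_of_norm_eq_one ha

lemma Finset.two_mul_card_filter_eq_one_of_sum_eq_zero {ι : Type*} [Fintype ι] {δ : ι → ℂ}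
    (hδ : ∀ k, δ k = 1 ∨ δ k = -1) (hsum : ∑ k, δ k = 0) :
    2 * #{k | δ k = 1} = Fintype.card ι := by
  classical
  have hδ' : ∀ k, δ k = 2 * (if δ k = 1 then 1 else 0) - 1 := by
    intro k
    rcases hδ k with h | h <;> norm_num [h]
  rw [sum_congr rfl fun k _ => hδ' k, sum_sub_distrib, ← mul_sum, sum_boole] at hsum
  simp only [sum_const, card_univ, nsmul_eq_mul, mul_one] at hsum
  exact_mod_cast sub_eq_zero.mp hsum

lemma exists_equiv_prod_bool_of_card_eq {ι : Type*} [Fintype ι] (p : ι → Prop)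
    [DecidablePred p] {m : ℕ} (hp : Fintype.card {x // p x} = m)
    (hnp : Fintype.card {x // ¬p x} = m) :
    ∃ e : Fin m × Bool ≃ ι, ∀ j b, p (e (j, b)) ↔ b = false := by
  let e : Fin m × Bool ≃ ι :=
    (Equiv.prodComm _ _).trans <| (Equiv.boolProdEquivSum _).trans <|
      (Equiv.sumCongr (Fintype.equivFinOfCardEq hp).symm
        (Fintype.equivFinOfCardEq hnp).symm).trans (Equiv.sumCompl p)
  refine ⟨e, fun j b => ?_⟩
  cases b
  · simpa [e, Equiv.boolProdEquivSum] using ((Fintype.equivFinOfCardEq hp).symm j).2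
  · simpa [e, Equiv.boolProdEquivSum] using ((Fintype.equivFinOfCardEq hnp).symm j).2

namespace IsCHM

variable {d : ℕ} {H : Matrix (Fin d) (Fin d) ℂ}

lemma conjTranspose_mul_self (hH : IsCHM H) : Hᴴ * H = (d : ℂ) • 1 := by
  ext j k
  simp only [Matrix.mul_apply, Matrix.conjTranspose_apply, Matrix.smul_apply, Matrix.one_apply,
    Complex.star_def, smul_eq_mul]
  by_cases hjk : j = k
  · subst hjk
    simp [conj_mul_self_of_norm_eq_one (hH.1 _ _)]
  · simp [hH.2 j k hjk, hjk]

lemma mul_conjTranspose_self (hH : IsCHM H) : H * Hᴴ = (d : ℂ) • 1 := by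
  rcases Nat.eq_zero_or_pos d with rfl | hd
  · exact Subsingleton.elim _ _
  have hd0 : (d : ℂ) ≠ 0 := by exact_mod_cast hd.ne'
  have hinv : ((d : ℂ)⁻¹ • Hᴴ) * H = 1 := by
    rw [Matrix.smul_mul, hH.conjTranspose_mul_self, smul_smul, inv_mul_cancel₀ hd0, one_smul]
  calc H * Hᴴ = (d : ℂ) • (H * ((d : ℂ)⁻¹ • Hᴴ)) := by
        rw [Matrix.mul_smul, smul_smul, mul_inv_cancel₀ hd0, one_smul]
    _ = (d : ℂ) • 1 := by rw [mul_eq_one_comm.mp hinv]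

lemma sum_mul_conj_row_eq_zero (hH : IsCHM H) {i j : Fin d} (hij : i ≠ j) :
    ∑ k, H i k * conj (H j k) = 0 := by
  simpa [Matrix.mul_apply, Matrix.one_apply, hij] using
    congrFun (congrFun hH.mul_conjTranspose_self i) j

lemma sum_eq_zero_of_conj_mul_row_eq (hH : IsCHM H) {i j : Fin d} (hij : i ≠ j)
    {δ : Fin d → ℂ} (hδ : ∀ k, conj (H i k) * H j k = δ k) : ∑ k, δ k = 0 := by
  rw [← hH.sum_mul_conj_row_eq_zero hij.symm]
  exact sum_congr rfl fun k _ => by rw [← hδ k, mul_comm]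

lemma submatrix_of_rows_pairwise_proportional {m : ℕ} (hH : IsCHM H) (r : Fin m × Bool ≃ Fin d)
    {δ : Fin d → ℂ} (hrel : ∀ i k, H (r (i, true)) k = δ k * H (r (i, false)) k)
    {c : Fin m → Fin d} (hc : Function.Injective c) {s : ℂ} (hs : ‖s‖ = 1)
    (hδc : ∀ j, δ (c j) = s) :
    IsCHM (H.submatrix (fun i => r (i, false)) c) := by
  refine ⟨fun i j => hH.1 _ _, fun j k hjk => ?_⟩
  have horth := hH.2 (c j) (c k) (hc.ne hjk)
  -- each lower row contributes `conj s * s = 1` times the term of its upper partner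
  rw [← r.sum_comp, Fintype.sum_prod_type] at horth
  simp only [Fintype.sum_bool, hrel, hδc, map_mul] at horth
  have hsum : 2 * ∑ i, conj (H (r (i, false)) (c j)) * H (r (i, false)) (c k) = 0 := by
    rw [← horth, mul_sum]
    refine sum_congr rfl fun i _ => ?_
    linear_combination -(conj (H (r (i, false)) (c j)) * H (r (i, false)) (c k)) *
      conj_mul_self_of_norm_eq_one hs
  simpa using hsum

end IsCHM

theorem aligned_ER_pairs_sylvester_general (d m : ℕ) (hd : d = 2 * m)
    (H : Matrix (Fin d) (Fin d) ℂ) (hH : IsCHM H)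
    (δ : Fin d → ℂ)
    (hδ : ∀ k, δ k = 1 ∨ δ k = -1)
    (gr : Fin m × Bool → Fin d)
    (hgr : Function.Injective gr)
    (hrows : ∀ (a : Fin m) (k : Fin d),
      (starRingEnd ℂ) (H (gr (a, false)) k) * H (gr (a, true)) k = δ k) :
    ∃ A B : Matrix (Fin m) (Fin m) ℂ, IsCHM A ∧ IsCHM B ∧
      ∃ r c : Fin m × Bool → Fin d, Function.Bijective r ∧ Function.Bijective c ∧
        ∀ (i j : Fin m) (b1 b2 : Bool),
          H (r (i, b1)) (c (j, b2)) =
            if b2 = false then A i j else if b1 = false then B i j else -B i j := by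
  classical
  subst hd
  have hr : Function.Bijective gr :=
    (Fintype.bijective_iff_injective_and_card gr).2 ⟨hgr, by simp; ring⟩
  have hrel i k : H (gr (i, true)) k = δ k * H (gr (i, false)) k :=
    eq_mul_of_conj_mul_eq (hH.1 _ _) (hrows i k)
  have hsum : ∑ k, δ k = 0 := by
    cases m with
    | zero => simp
    | succ m => exact hH.sum_eq_zero_of_conj_mul_row_eq (hgr.ne (by simp)) (hrows 0)
  have hhalf := two_mul_card_filter_eq_one_of_sum_eq_zero hδ hsum
  have hpos : Fintype.card {k // δ k = 1} = m := by
    rw [Fintype.card_subtype]; simp only [Fintype.card_fin] at hhalf; omega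
  obtain ⟨c, hc⟩ := exists_equiv_prod_bool_of_card_eq (δ · = 1) hpos
    (by rw [Fintype.card_subtype_compl, hpos]; simp [two_mul])
  have hcδ j b : δ (c (j, b)) = if b then -1 else 1 := by
    cases b
    · simpa using (hc j false).2 rfl
    · simpa using (hδ _).resolve_left (by simpa using hc j true)
  let r := Equiv.ofBijective gr hr
  have hcol b : Function.Injective fun j => c (j, b) := c.injective.comp (Prod.mk_left_injective b)
  refine ⟨H.submatrix (fun i => gr (i, false)) (fun j => c (j, false)),
    H.submatrix (fun i => gr (i, false)) (fun j => c (j, true)),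
    hH.submatrix_of_rows_pairwise_proportional r hrel (hcol false) (s := 1) (by simp)
      (fun j => by simpa using hcδ j false),
    hH.submatrix_of_rows_pairwise_proportional r hrel (hcol true) (s := -1) (by simp)
      (fun j => by simpa using hcδ j true),
    gr, c, hr, c.bijective, fun i j b1 b2 => ?_⟩
  cases b1 <;> cases b2 <;> simp [hrel, hcδ]

/-- a complex Hadamard matrix of even order `d = 2m` possessing `m` disjoint
aligned ER pairs of columns and `m` disjoint aligned ER pairs of rows is, after suitable
row and column permutations, of the block form `[[A, B], [A, -B]]` with `A`, `B`
complex Hadamard matrices of order `m`. -/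
theorem aligned_ER_pairs_sylvester (d m : ℕ) (hd : d = 2 * m)
    (H : Matrix (Fin d) (Fin d) ℂ) (hH : IsCHM H)
    (ε δ : Fin d → ℂ)
    (hε : ∀ k, ε k = 1 ∨ ε k = -1) (hδ : ∀ k, δ k = 1 ∨ δ k = -1)
    (gc gr : Fin m × Bool → Fin d)
    (hgc : Function.Injective gc) (hgr : Function.Injective gr)
    (hcols : ∀ (a : Fin m) (k : Fin d),
      (starRingEnd ℂ) (H k (gc (a, false))) * H k (gc (a, true)) = ε k)
    (hrows : ∀ (a : Fin m) (k : Fin d),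
      (starRingEnd ℂ) (H (gr (a, false)) k) * H (gr (a, true)) k = δ k) :
    ∃ A B : Matrix (Fin m) (Fin m) ℂ, IsCHM A ∧ IsCHM B ∧
      ∃ r c : Fin m × Bool → Fin d, Function.Bijective r ∧ Function.Bijective c ∧
        ∀ (i j : Fin m) (b1 b2 : Bool),
          H (r (i, b1)) (c (j, b2)) =
            if b2 = false then A i j else if b1 = false then B i j else -B i j :=
  aligned_ER_pairs_sylvester_general d m hd H hH δ hδ gr hgr hrows
end

section
/- Let d be odd and let H(ξ) be a continuous one-parameter family of d×d complex Hadamard matrices such that H(ξ) differs from H(0) only in two columns, with those two columns lying in the linear span of the corresponding two columns of H(0) for all ξ. Then H(ξ) is equivalent to H(0) for all ξ (the family is trivial); equivalently, a genuine parameter of a family of complex Hadamard matrices in odd dimension cannot appear in only two columns. -/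
/-!
Write the two changed columns as `x a + y b` with `a`, `b` the original ones, and put
`εᵢ = conj aᵢ · bᵢ`, so that the `εᵢ` are unimodular with `∑ εᵢ = 0`. Unimodularity of
`x + y εᵢ` makes `Re (conj x · y · εᵢ)` independent of `i`, hence zero after summing. So each
`conj x · y · εᵢ` is purely imaginary of modulus `‖x y‖`, and both signs of its imaginary part
occur equally often, since these also sum to zero. In odd dimension this forces `x y = 0`: each
new column is a unimodular multiple of one old column, orthogonality rules out two multiples of
the same column, and what remains is a rephasing of the two columns, possibly after swapping them.
-/

open Complex Finset

/-- Equivalence of complex Hadamard matrices: `A = D₁ P₁ B P₂ D₂` with unitary diagonal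
matrices `D₁, D₂` and permutation matrices `P₁, P₂`. -/
def CHMEquiv {d : ℕ} (A B : Matrix (Fin d) (Fin d) ℂ) : Prop :=
  ∃ d1 d2 : Fin d → ℂ,
    (∀ i, ‖d1 i‖ = 1) ∧ (∀ j, ‖d2 j‖ = 1) ∧
    ∃ σ τ : Equiv.Perm (Fin d), ∀ i j, A i j = d1 i * B (σ i) (τ j) * d2 j

open ComplexConjugate

variable {ι : Type*} [Fintype ι]

theorem eq_zero_of_sum_eq_zero_of_forall_eq_or_eq_neg (hι : Odd (Fintype.card ι))
    {f : ι → ℝ} {t : ℝ} (hf : ∀ i, f i = t ∨ f i = -t) (hsum : ∑ i, f i = 0) : t = 0 := by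
  classical
  by_contra ht
  have hshift : ∀ i, f i + t = if f i = t then 2 * t else 0 := by
    intro i
    split_ifs with h
    · linarith
    · linarith [(hf i).resolve_left h]
  have hcount : (Fintype.card ι : ℝ) * t = #{i | f i = t} * (2 * t) := by
    calc (Fintype.card ι : ℝ) * t = ∑ i, (f i + t) := by
          simp [sum_add_distrib, hsum, card_univ]
      _ = #{i | f i = t} * (2 * t) := by
          simp_rw [hshift]
          rw [sum_ite, sum_const_zero, add_zero, sum_const, nsmul_eq_mul]
  have hcard : (Fintype.card ι : ℝ) = 2 * #{i | f i = t} :=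
    mul_right_cancel₀ ht (by rw [hcount]; ring)
  norm_cast at hcard
  exact Nat.not_even_iff_odd.mpr hι (hcard ▸ even_two_mul _)

theorem re_conj_mul_mul_conj_mul_of_norm_add_eq_one {a b x y : ℂ} (ha : ‖a‖ = 1)
    (hb : ‖b‖ = 1) (h : ‖x * a + y * b‖ = 1) :
    (conj x * y * (conj a * b)).re = (1 - ‖x‖ ^ 2 - ‖y‖ ^ 2) / 2 := by
  have hsq := normSq_add (x * a) (y * b)
  have hconj : x * a * conj (y * b) = conj (conj x * y * (conj a * b)) := by
    simp only [map_mul, conj_conj]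
    ring
  simp only [normSq_eq_norm_sq, norm_mul, ha, hb, h, hconj, conj_re] at hsq
  linarith

theorem eq_zero_or_eq_zero_of_forall_norm_add_eq_one (hι : Odd (Fintype.card ι))
    {a b : ι → ℂ} (ha : ∀ i, ‖a i‖ = 1) (hb : ∀ i, ‖b i‖ = 1)
    (hab : ∑ i, conj (a i) * b i = 0) {x y : ℂ} (h : ∀ i, ‖x * a i + y * b i‖ = 1) :
    x = 0 ∨ y = 0 := by
  set w := conj x * y
  set ε : ι → ℂ := fun i => conj (a i) * b i
  have hsum : ∑ i, w * ε i = 0 := by rw [← mul_sum, hab, mul_zero]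
  have hre : ∀ i, (w * ε i).re = 0 := by
    have hconst : ∀ i, (w * ε i).re = (1 - ‖x‖ ^ 2 - ‖y‖ ^ 2) / 2 :=
      fun i => re_conj_mul_mul_conj_mul_of_norm_add_eq_one (ha i) (hb i) (h i)
    have hzero := congrArg re hsum
    simp only [re_sum, hconst, sum_const, card_univ, nsmul_eq_mul, zero_re] at hzero
    intro i
    rw [hconst i]
    exact (mul_eq_zero.mp hzero).resolve_left (Nat.cast_ne_zero.mpr hι.pos.ne')
  have him : ∀ i, (w * ε i).im = ‖w‖ ∨ (w * ε i).im = -‖w‖ := by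
    intro i
    have hnorm : ‖w * ε i‖ = ‖w‖ := by simp [ε, ha i, hb i]
    rw [← hnorm]
    exact abs_eq (norm_nonneg _) |>.mp (abs_im_eq_norm.mpr (hre i))
  have hw : ‖w‖ = 0 :=
    eq_zero_of_sum_eq_zero_of_forall_eq_or_eq_neg hι him (by rw [← im_sum, hsum, zero_im])
  simpa [w] using hw

theorem eq_zero_and_norm_eq_one_of_forall_norm_add_eq_one (hι : Odd (Fintype.card ι))
    {a b : ι → ℂ} (ha : ∀ i, ‖a i‖ = 1) (hb : ∀ i, ‖b i‖ = 1)
    (hab : ∑ i, conj (a i) * b i = 0) {x y : ℂ} (h : ∀ i, ‖x * a i + y * b i‖ = 1) :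
    (y = 0 ∧ ‖x‖ = 1) ∨ (x = 0 ∧ ‖y‖ = 1) := by
  obtain ⟨i⟩ := Fintype.card_pos_iff.mp hι.pos
  rcases eq_zero_or_eq_zero_of_forall_norm_add_eq_one hι ha hb hab h with rfl | rfl
  · simpa [ha i, hb i] using h i
  · simpa [ha i, hb i] using h i

theorem sum_conj_mul_mul_ne_zero [Nonempty ι] {b : ι → ℂ} (hb : ∀ i, ‖b i‖ = 1) {p q : ℂ}
    (hp : ‖p‖ = 1) (hq : ‖q‖ = 1) : ∑ i, conj (p * b i) * (q * b i) ≠ 0 := by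
  have hterm : ∀ i, conj (p * b i) * (q * b i) = conj p * q := by
    intro i
    calc conj (p * b i) * (q * b i) = conj p * q * (conj (b i) * b i) := by
          rw [map_mul]; ring
      _ = conj p * q := by rw [conj_mul', hb i]; simp
  have hp0 : p ≠ 0 := norm_ne_zero_iff.mp (by simp [hp])
  have hq0 : q ≠ 0 := norm_ne_zero_iff.mp (by simp [hq])
  rw [sum_congr rfl fun i _ => hterm i]
  simp [hp0, hq0]

theorem CHMEquiv_of_columns_eq_mul {d : ℕ} {H H' : Matrix (Fin d) (Fin d) ℂ} {c1 c2 : Fin d}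
    (hne : c1 ≠ c2) (τ : Equiv.Perm (Fin d)) (hτ : ∀ k, k ≠ c1 → k ≠ c2 → τ k = k)
    (hsame : ∀ j k, k ≠ c1 → k ≠ c2 → H' j k = H j k) {p q : ℂ} (hp : ‖p‖ = 1)
    (hq : ‖q‖ = 1) (h1 : ∀ j, H' j c1 = p * H j (τ c1))
    (h2 : ∀ j, H' j c2 = q * H j (τ c2)) : CHMEquiv H' H := by
  refine ⟨1, fun k => if k = c1 then p else if k = c2 then q else 1, by simp,
    fun k => by dsimp only; split_ifs <;> simp [hp, hq], 1, τ, fun j k => ?_⟩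
  by_cases hk1 : k = c1
  · subst hk1; simp [h1, mul_comm]
  by_cases hk2 : k = c2
  · subst hk2; simp [h2, hne.symm, mul_comm]
  simp [hsame j k hk1 hk2, hτ k hk1 hk2, hk1, hk2]

/-- in odd dimension, a complex Hadamard matrix differing from `H` only in
two columns which lie in the span of the corresponding two columns of `H` is equivalent
to `H`: a genuine parameter of a family cannot appear in only two columns. -/
theorem odd_dim_two_column_deformation_trivial (d : ℕ) (hd : Odd d)
    (H H' : Matrix (Fin d) (Fin d) ℂ) (hH : IsCHM H) (hH' : IsCHM H')
    (c1 c2 : Fin d) (hne : c1 ≠ c2)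
    (hsame : ∀ j k, k ≠ c1 → k ≠ c2 → H' j k = H j k)
    (hspan1 : ∃ x y : ℂ, ∀ j, H' j c1 = x * H j c1 + y * H j c2)
    (hspan2 : ∃ x y : ℂ, ∀ j, H' j c2 = x * H j c1 + y * H j c2) :
    CHMEquiv H' H := by
  obtain ⟨x, y, h1⟩ := hspan1
  obtain ⟨u, v, h2⟩ := hspan2
  have : Nonempty (Fin d) := ⟨⟨0, hd.pos⟩⟩
  have key := fun {x y : ℂ} (h : ∀ j, ‖x * H j c1 + y * H j c2‖ = 1) =>
    eq_zero_and_norm_eq_one_of_forall_norm_add_eq_one (by simpa using hd)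
      (fun j => hH.1 j c1) (fun j => hH.1 j c2) (hH.2 c1 c2 hne) h
  have horth := hH'.2 c1 c2 hne
  rcases key fun j => h1 j ▸ hH'.1 j c1 with ⟨rfl, hx⟩ | ⟨rfl, hy⟩ <;>
    rcases key fun j => h2 j ▸ hH'.1 j c2 with ⟨rfl, hu⟩ | ⟨rfl, hv⟩ <;>
    simp only [zero_mul, add_zero, zero_add] at h1 h2
  · exact absurd horth (by simpa only [h1, h2] using sum_conj_mul_mul_ne_zero (hH.1 · c1) hx hu)
  · exact CHMEquiv_of_columns_eq_mul hne 1 (fun _ _ _ => rfl) hsame hx hv h1 h2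
  · refine CHMEquiv_of_columns_eq_mul hne (Equiv.swap c1 c2)
      (fun _ => Equiv.swap_apply_of_ne_of_ne) hsame hy hu ?_ ?_ <;> simpa
  · exact absurd horth (by simpa only [h1, h2] using sum_conj_mul_mul_ne_zero (hH.1 · c2) hy hv)
end

section
/- If H_1 and H_2 are inequivalent real Hadamard matrices of the same order d, then the affine families of complex Hadamard matrices stemming from them via the ER-pair construction are inequivalent: no member of the family stemming from H_1 is equivalent to H_2. -/
/-!
Suppose `M ξ = D₁ P₁ H₂ P₂ D₂`. Squaring kills the signs of `H₂`, so the entrywise squares of any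
two columns of `M ξ` are proportional. On the pair `a` with sign pattern `ε_a` (which takes both
values, as the two columns of `H₁` are orthogonal) the squared phase is
`exp (2 i ε_a(j) ξ_a) = cos 2ξ_a + i ε_a(j) sin 2ξ_a`. If `sin 2ξ_a = 0` for every pair, each phase
`exp (i ε_a(j) ξ_a)` is a constant or a constant times `ε_a(j)`, i.e. a column phase, possibly
after swapping the two columns of the pair. Otherwise some pair `a₀` has `sin 2ξ_{a₀} ≠ 0`;
comparing with it forces every column into a pair and `ε_a = ±ε_{a₀}` for all `a`, and after the
row phases `exp (i ε_{a₀}(j) ξ_{a₀})` are split off we are back in the first case. Either way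
`M ξ` is equivalent to `H₁`, hence `H₁` to `H₂`.
-/

open Complex Finset

theorem sq_ofReal_eq_one {x : ℝ} (hx : x = 1 ∨ x = -1) : (x : ℂ) ^ 2 = 1 := by
  rcases hx with rfl | rfl <;> simp

namespace CHMEquiv

variable {d : ℕ} {A B C : Matrix (Fin d) (Fin d) ℂ}

theorem symm (h : CHMEquiv A B) : CHMEquiv B A := by
  obtain ⟨d1, d2, hd1, hd2, σ, τ, hA⟩ := h
  refine ⟨fun i => (d1 (σ.symm i))⁻¹, fun j => (d2 (τ.symm j))⁻¹, fun i => by simp [hd1],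
    fun j => by simp [hd2], σ.symm, τ.symm, fun i j => ?_⟩
  have h1 : d1 (σ.symm i) ≠ 0 := norm_ne_zero_iff.mp (by simp [hd1])
  have h2 : d2 (τ.symm j) ≠ 0 := norm_ne_zero_iff.mp (by simp [hd2])
  rw [hA, Equiv.apply_symm_apply, Equiv.apply_symm_apply]
  field_simp

theorem trans (hAB : CHMEquiv A B) (hBC : CHMEquiv B C) : CHMEquiv A C := by
  obtain ⟨d1, d2, hd1, hd2, σ, τ, hA⟩ := hAB
  obtain ⟨e1, e2, he1, he2, σ', τ', hB⟩ := hBC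
  refine ⟨fun i => d1 i * e1 (σ i), fun j => e2 (τ j) * d2 j, fun i => by simp [hd1, he1],
    fun j => by simp [hd2, he2], σ.trans σ', τ.trans τ', fun i j => ?_⟩
  rw [hA, hB, Equiv.trans_apply, Equiv.trans_apply]
  ring

theorem exists_sq_col_eq {H : Matrix (Fin d) (Fin d) ℝ} (hH : ∀ i j, H i j = 1 ∨ H i j = -1)
    (h : CHMEquiv A (H.map fun x => (x : ℂ))) (k k' : Fin d) :
    ∃ w ≠ 0, ∀ j, A j k ^ 2 = w * A j k' ^ 2 := by
  obtain ⟨d1, d2, -, hd2, σ, τ, hA⟩ := h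
  have hne : ∀ k, d2 k ≠ 0 := fun k => norm_ne_zero_iff.mp (by simp [hd2])
  refine ⟨(d2 k / d2 k') ^ 2, pow_ne_zero 2 (div_ne_zero (hne k) (hne k')), fun j => ?_⟩
  have hk' := hne k'
  simp only [hA, Matrix.map_apply, mul_pow, sq_ofReal_eq_one (hH _ _)]
  field_simp

end CHMEquiv

theorem exp_I_mul_sign_mul {ε : ℝ} (hε : ε = 1 ∨ ε = -1) (θ : ℝ) :
    cexp (I * ε * θ) = Real.cos θ + I * ε * Real.sin θ := by
  rcases hε with rfl | rfl
  · rw [show I * ((1 : ℝ) : ℂ) * θ = θ * I by push_cast; ring, exp_mul_I]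
    push_cast; ring
  · rw [show I * ((-1 : ℝ) : ℂ) * θ = ((-θ : ℝ) : ℂ) * I by push_cast; ring, exp_mul_I,
      ← ofReal_cos, ← ofReal_sin, Real.cos_neg, Real.sin_neg]
    push_cast; ring

theorem sin_two_mul_eq_zero_of_exp_sq_eq {δ₁ δ₂ η : ℝ} (h₁ : δ₁ = 1 ∨ δ₁ = -1)
    (h₂ : δ₂ = 1 ∨ δ₂ = -1) (hne : δ₁ ≠ δ₂)
    (h : cexp (I * δ₁ * η) ^ 2 = cexp (I * δ₂ * η) ^ 2) : Real.sin (2 * η) = 0 := by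
  have hdouble : ∀ {δ : ℝ}, (δ = 1 ∨ δ = -1) →
      cexp (I * δ * η) ^ 2 = Real.cos (2 * η) + I * δ * Real.sin (2 * η) := fun hδ => by
    rw [← exp_nat_mul, ← exp_I_mul_sign_mul hδ]
    push_cast; ring_nf
  rw [hdouble h₁, hdouble h₂] at h
  have hI : I * ((δ₁ - δ₂ : ℝ) : ℂ) ≠ 0 :=
    mul_ne_zero I_ne_zero (by exact_mod_cast sub_ne_zero.mpr hne)
  have hprod : I * ((δ₁ - δ₂ : ℝ) : ℂ) * Real.sin (2 * η) = 0 := by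
    rw [ofReal_sub]; linear_combination h
  exact_mod_cast (mul_eq_zero.mp hprod).resolve_left hI

theorem exists_exp_I_mul_sign_mul_eq {θ : ℝ} (hθ : Real.sin (2 * θ) = 0) :
    ∃ (x : Bool) (c : ℂ), ‖c‖ = 1 ∧
      ∀ ε : ℝ, (ε = 1 ∨ ε = -1) → cexp (I * ε * θ) = c * (if x then ε else 1) := by
  have hpyth := Real.sin_sq_add_cos_sq θ
  rw [Real.sin_two_mul, mul_assoc, mul_eq_zero, mul_eq_zero] at hθ
  rcases hθ with h | h | h
  · norm_num at h
  · refine ⟨false, Real.cos θ, ?_, fun ε hε => by simp [exp_I_mul_sign_mul hε, h]⟩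
    rw [norm_real, ← pow_eq_one_iff_of_nonneg (norm_nonneg _) two_ne_zero, Real.norm_eq_abs,
      sq_abs]
    nlinarith
  · refine ⟨true, I * Real.sin θ, ?_, fun ε hε => by simp [exp_I_mul_sign_mul hε, h]; ring⟩
    rw [norm_mul, norm_I, one_mul, norm_real,
      ← pow_eq_one_iff_of_nonneg (norm_nonneg _) two_ne_zero, Real.norm_eq_abs, sq_abs]
    nlinarith

theorem exists_sign_forall_eq_mul {ι : Type*} {ε δ : ι → ℝ}
    (hε : ∀ j, ε j = 1 ∨ ε j = -1) (hδ : ∀ j, δ j = 1 ∨ δ j = -1) {j₁ j₂ : ι}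
    (hδ₁₂ : δ j₁ ≠ δ j₂) (hfactor : ∀ j j', ε j = ε j' → δ j = δ j') :
    ∃ s : ℝ, (s = 1 ∨ s = -1) ∧ ∀ j, ε j = s * δ j := by
  have hneg : ∀ {a b : ℝ}, (a = 1 ∨ a = -1) → (b = 1 ∨ b = -1) → a ≠ b → b = -a := by
    rintro a b (rfl | rfl) (rfl | rfl) h <;> simp_all
  have hδ₁sq : δ j₁ * δ j₁ = 1 := by rcases hδ j₁ with h | h <;> simp [h]
  refine ⟨ε j₁ * δ j₁, ?_, fun j => ?_⟩
  · rcases hε j₁ with h | h <;> rcases hδ j₁ with h' | h' <;> simp [h, h']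
  by_cases hj : ε j = ε j₁
  · rw [hj, hfactor j j₁ hj, mul_assoc, hδ₁sq, mul_one]
  · have hε₁₂ : ε j₁ ≠ ε j₂ := fun h => hδ₁₂ (hfactor _ _ h)
    have hεj : ε j = -ε j₁ := hneg (hε j₁) (hε j) (Ne.symm hj)
    have hj₂ : ε j = ε j₂ := hεj.trans (hneg (hε j₁) (hε j₂) hε₁₂).symm
    rw [hfactor j j₂ hj₂, hneg (hδ j₁) (hδ j₂) hδ₁₂, hεj]
    linear_combination ε j₁ * hδ₁sq

theorem exists_exp_eq_exp_mul_of_sin_two_mul_ne_zero {ι : Type*} {ε δ : ι → ℝ} {θ η : ℝ}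
    {w : ℂ} (hε : ∀ j, ε j = 1 ∨ ε j = -1) (hδ : ∀ j, δ j = 1 ∨ δ j = -1) {j₁ j₂ : ι}
    (hδ₁₂ : δ j₁ ≠ δ j₂) (hη : Real.sin (2 * η) ≠ 0) (hw : w ≠ 0)
    (h : ∀ j, cexp (I * ε j * θ) ^ 2 = w * cexp (I * δ j * η) ^ 2) :
    ∃ (x : Bool) (c : ℂ), ‖c‖ = 1 ∧
      ∀ j, cexp (I * ε j * θ) = cexp (I * δ j * η) * c * (if x then ε j else 1) := by
  have hfactor : ∀ j j', ε j = ε j' → δ j = δ j' := fun j j' he => by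
    by_contra hne
    exact hη (sin_two_mul_eq_zero_of_exp_sq_eq (hδ j) (hδ j') hne
      (mul_left_cancel₀ hw (by rw [← h, ← h, he])))
  obtain ⟨s, hs, hεδ⟩ := exists_sign_forall_eq_mul hε hδ hδ₁₂ hfactor
  have hδε : ∀ j, δ j = s * ε j := fun j => by
    rw [hεδ]; rcases hs with rfl | rfl <;> ring
  have hsplit : ∀ j, cexp (I * ε j * θ) =
      cexp (I * δ j * η) * cexp (I * δ j * ((s * θ - η : ℝ) : ℂ)) := fun j => by
    rw [hεδ, ← exp_add]; push_cast; ring_nf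
  have hsq : ∀ j, cexp (I * δ j * ((s * θ - η : ℝ) : ℂ)) ^ 2 = w := fun j => by
    have := h j
    rw [hsplit, mul_pow, mul_comm w] at this
    exact mul_left_cancel₀ (pow_ne_zero 2 (exp_ne_zero _)) this
  obtain ⟨x, c, hc, hform⟩ := exists_exp_I_mul_sign_mul_eq
    (sin_two_mul_eq_zero_of_exp_sq_eq (hδ j₁) (hδ j₂) hδ₁₂ (by rw [hsq, hsq]))
  refine ⟨x, c * (if x then s else 1), ?_, fun j => ?_⟩
  · cases x <;> rcases hs with rfl | rfl <;> simp [hc]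
  · rw [hsplit, hform _ (hδ j), hδε]
    cases x <;> simp only [if_true, if_false, Bool.false_eq_true] <;> push_cast <;> ring

theorem exists_rowPhase {ι κ : Type*} (ε : κ → ι → ℝ) (ξ : κ → ℝ) (P : Prop)
    (hε : ∀ a j, ε a j = 1 ∨ ε a j = -1) (hε' : ∀ a, ∃ j₁ j₂, ε a j₁ ≠ ε a j₂)
    (hpair : ∀ a a', ∃ w ≠ 0, ∀ j,
      cexp (I * ε a j * ξ a) ^ 2 = w * cexp (I * ε a' j * ξ a') ^ 2)
    (hP : P → ∀ a, ∃ w ≠ 0, ∀ j, cexp (I * ε a j * ξ a) ^ 2 = w) :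
    ∃ ρ : ι → ℂ, (∀ j, ‖ρ j‖ = 1) ∧ (P → ∀ j, ρ j = 1) ∧
      ∀ a, ∃ (x : Bool) (c : ℂ), ‖c‖ = 1 ∧
        ∀ j, cexp (I * ε a j * ξ a) = ρ j * c * (if x then ε a j else 1) := by
  by_cases hall : ∀ a, Real.sin (2 * ξ a) = 0
  · refine ⟨1, by simp, fun _ _ => rfl, fun a => ?_⟩
    obtain ⟨x, c, hc, hform⟩ := exists_exp_I_mul_sign_mul_eq (hall a)
    exact ⟨x, c, hc, fun j => by simp [hform _ (hε a j)]⟩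
  push Not at hall
  obtain ⟨a₀, ha₀⟩ := hall
  obtain ⟨j₁, j₂, hj₁₂⟩ := hε' a₀
  refine ⟨fun j => cexp (I * ε a₀ j * ξ a₀), fun j => ?_, fun hp => ?_, fun a => ?_⟩
  · dsimp only
    rw [show I * ε a₀ j * ξ a₀ = ((ε a₀ j * ξ a₀ : ℝ) : ℂ) * I by push_cast; ring]
    exact norm_exp_ofReal_mul_I _
  · obtain ⟨w, -, h⟩ := hP hp a₀
    exact absurd
      (sin_two_mul_eq_zero_of_exp_sq_eq (hε a₀ j₁) (hε a₀ j₂) hj₁₂ (by rw [h, h])) ha₀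
  · obtain ⟨w, hw, h⟩ := hpair a a₀
    exact exists_exp_eq_exp_mul_of_sin_two_mul_ne_zero (hε a) (hε a₀) hj₁₂ ha₀ hw h

def pairSign {d m : ℕ} (H : Matrix (Fin d) (Fin d) ℝ) (g : Fin m × Bool → Fin d) (a : Fin m)
    (j : Fin d) : ℝ :=
  H j (g (a, false)) * H j (g (a, true))

section ERPair

variable {d m : ℕ} {H : Matrix (Fin d) (Fin d) ℝ} {g : Fin m × Bool → Fin d}

theorem pairSign_eq_one_or (hH : ∀ i j, H i j = 1 ∨ H i j = -1) (a : Fin m) (j : Fin d) :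
    pairSign H g a j = 1 ∨ pairSign H g a j = -1 := by
  rcases hH j (g (a, false)) with h | h <;> rcases hH j (g (a, true)) with h' | h' <;>
    simp [pairSign, h, h']

theorem ite_pairSign_mul (hH : ∀ i j, H i j = 1 ∨ H i j = -1) (x : Bool) (a : Fin m) (b : Bool)
    (j : Fin d) :
    (if x then pairSign H g a j else 1) * H j (g (a, b)) = H j (g (a, xor x b)) := by
  cases x
  · simp
  · rcases hH j (g (a, b)) with h | h <;> cases b <;> simp [pairSign, h]

theorem exists_pairSign_ne (hH : ∀ i j, H i j = 1 ∨ H i j = -1)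
    (horth : ∀ j k, j ≠ k → ∑ i, H i j * H i k = 0) (hg : Function.Injective g) (a : Fin m) :
    ∃ j₁ j₂, pairSign H g a j₁ ≠ pairSign H g a j₂ := by
  by_contra hconst
  push Not at hconst
  have hsum : ∑ i, pairSign H g a i = 0 :=
    horth _ _ fun h => Bool.false_ne_true (Prod.ext_iff.mp (hg h)).2
  rw [Finset.sum_congr rfl fun i _ => hconst i (g (a, false)), Finset.sum_const,
    Finset.card_univ, Fintype.card_fin, nsmul_eq_mul] at hsum
  have hd : (d : ℝ) ≠ 0 := Nat.cast_ne_zero.mpr (g (a, false)).pos.ne'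
  rcases pairSign_eq_one_or (g := g) hH a (g (a, false)) with h | h <;> simp [h, hd] at hsum

end ERPair

section ERFamily

variable {d m : ℕ} {H H' : Matrix (Fin d) (Fin d) ℝ} {g : Fin m × Bool → Fin d}
  {N : Matrix (Fin d) (Fin d) ℂ} {ξ : Fin m → ℝ}

theorem exists_sq_pairPhase_eq (hH : ∀ i j, H i j = 1 ∨ H i j = -1)
    (hH' : ∀ i j, H' i j = 1 ∨ H' i j = -1)
    (hN : ∀ j a b, N j (g (a, b)) = cexp (I * (pairSign H g a j : ℂ) * ξ a) * H j (g (a, b)))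
    (hequiv : CHMEquiv N (H'.map fun x => (x : ℂ))) (a a' : Fin m) :
    ∃ w ≠ 0, ∀ j, cexp (I * (pairSign H g a j : ℂ) * ξ a) ^ 2 =
      w * cexp (I * (pairSign H g a' j : ℂ) * ξ a') ^ 2 := by
  obtain ⟨w, hw, h⟩ := hequiv.exists_sq_col_eq hH' (g (a, false)) (g (a', false))
  refine ⟨w, hw, fun j => ?_⟩
  simpa only [hN, mul_pow, sq_ofReal_eq_one (hH _ _), mul_one] using h j

theorem exists_sq_pairPhase_eq_const (hH : ∀ i j, H i j = 1 ∨ H i j = -1)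
    (hH' : ∀ i j, H' i j = 1 ∨ H' i j = -1)
    (hN₀ : ∀ j k, (∀ a b, g (a, b) ≠ k) → N j k = H j k)
    (hN : ∀ j a b, N j (g (a, b)) = cexp (I * (pairSign H g a j : ℂ) * ξ a) * H j (g (a, b)))
    (hequiv : CHMEquiv N (H'.map fun x => (x : ℂ))) (hk : ∃ k, ∀ a b, g (a, b) ≠ k)
    (a : Fin m) : ∃ w ≠ 0, ∀ j, cexp (I * (pairSign H g a j : ℂ) * ξ a) ^ 2 = w := by
  obtain ⟨k, hk⟩ := hk
  obtain ⟨w, hw, h⟩ := hequiv.exists_sq_col_eq hH' (g (a, false)) k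
  refine ⟨w, hw, fun j => ?_⟩
  simpa only [hN, hN₀ j k hk, mul_pow, sq_ofReal_eq_one (hH _ _), mul_one] using h j

/-- Row phases `ρ`, column phases `c a` and, where `x a` holds, the swap of the two columns
of the pair `a` turn `N` into `H`. -/
theorem CHMEquiv.of_rowPhase (hH : ∀ i j, H i j = 1 ∨ H i j = -1) (hg : Function.Injective g)
    (hN₀ : ∀ j k, (∀ a b, g (a, b) ≠ k) → N j k = H j k)
    (hN : ∀ j a b, N j (g (a, b)) = cexp (I * (pairSign H g a j : ℂ) * ξ a) * H j (g (a, b)))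
    {ρ : Fin d → ℂ} (hρ : ∀ j, ‖ρ j‖ = 1) (hρ₀ : (∃ k, ∀ a b, g (a, b) ≠ k) → ∀ j, ρ j = 1)
    (hform : ∀ a, ∃ (x : Bool) (c : ℂ), ‖c‖ = 1 ∧ ∀ j,
      cexp (I * (pairSign H g a j : ℂ) * ξ a) = ρ j * c * (if x then pairSign H g a j else 1)) :
    CHMEquiv N (H.map fun x => (x : ℂ)) := by
  choose x c hc hx using hform
  have hswap : Function.Involutive fun p : Fin m × Bool => (p.1, xor (x p.1) p.2) := by
    intro p; simp
  set π := hswap.toPerm.viaEmbedding ⟨g, hg⟩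
  have hπ : ∀ p, π (g p) = g (p.1, xor (x p.1) p.2) :=
    Equiv.Perm.viaEmbedding_apply _ ⟨g, hg⟩
  have hπ₀ : ∀ k, (¬∃ p, g p = k) → π k = k := fun k hk =>
    Equiv.Perm.viaEmbedding_apply_of_notMem _ ⟨g, hg⟩ k hk
  refine ⟨ρ, Function.extend g (fun p => c p.1) 1, hρ, fun k => ?_, Equiv.refl _, π,
    fun j k => ?_⟩
  · by_cases hk : ∃ p, g p = k
    · obtain ⟨p, rfl⟩ := hk
      rw [hg.extend_apply]
      exact hc _
    · simp [Function.extend_apply' _ _ _ hk]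
  · by_cases hk : ∃ p, g p = k
    · obtain ⟨⟨a, b⟩, rfl⟩ := hk
      rw [hN, hx, Matrix.map_apply, hπ, hg.extend_apply, ← ite_pairSign_mul hH]
      cases x a <;> simp <;> ring
    · have hk' : ∀ a b, g (a, b) ≠ k := fun a b h => hk ⟨(a, b), h⟩
      simp [hN₀ j k hk', hπ₀ k hk, Function.extend_apply' _ _ _ hk, hρ₀ ⟨k, hk'⟩ j]

end ERFamily

theorem inequivalent_real_hadamard_families_general (d m : ℕ)
    (H1 H2 : Matrix (Fin d) (Fin d) ℝ)
    (h1ent : ∀ i j, H1 i j = 1 ∨ H1 i j = -1)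
    (h1orth : ∀ j k, j ≠ k → ∑ i, H1 i j * H1 i k = 0)
    (h2ent : ∀ i j, H2 i j = 1 ∨ H2 i j = -1)
    (hineq : ¬ CHMEquiv (H1.map fun x => (x : ℂ)) (H2.map fun x => (x : ℂ)))
    (g : Fin m × Bool → Fin d) (hg : Function.Injective g)
    (M : (Fin m → ℝ) → Matrix (Fin d) (Fin d) ℂ)
    (hM1 : ∀ (ξ : Fin m → ℝ) (j k : Fin d),
      (∀ a b, g (a, b) ≠ k) → M ξ j k = (H1 j k : ℂ))
    (hM2 : ∀ (ξ : Fin m → ℝ) (j : Fin d) (a : Fin m) (b : Bool),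
      M ξ j (g (a, b)) =
        Complex.exp (Complex.I * ((H1 j (g (a, false)) * H1 j (g (a, true)) : ℝ) : ℂ)
            * (ξ a : ℂ)) * ((H1 j (g (a, b)) : ℝ) : ℂ)) :
    ∀ ξ : Fin m → ℝ, ¬ CHMEquiv (M ξ) (H2.map fun x => (x : ℂ)) := by
  intro ξ hequiv
  obtain ⟨ρ, hρ, hρ₀, hform⟩ := exists_rowPhase (pairSign H1 g) ξ (∃ k, ∀ a b, g (a, b) ≠ k)
    (pairSign_eq_one_or h1ent) (exists_pairSign_ne h1ent h1orth hg)
    (exists_sq_pairPhase_eq h1ent h2ent (hM2 ξ) hequiv)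
    (exists_sq_pairPhase_eq_const h1ent h2ent (hM1 ξ) (hM2 ξ) hequiv)
  exact hineq ((CHMEquiv.of_rowPhase h1ent hg (hM1 ξ) (hM2 ξ) hρ hρ₀ hform).symm.trans hequiv)

/-- if `H₁` and `H₂` are inequivalent real Hadamard matrices of order `d`,
then no member of the affine family stemming from `H₁` via the ER-pair construction is
equivalent to `H₂`. -/
theorem inequivalent_real_hadamard_families (d m : ℕ)
    (H1 H2 : Matrix (Fin d) (Fin d) ℝ)
    (h1ent : ∀ i j, H1 i j = 1 ∨ H1 i j = -1)
    (h1orth : ∀ j k, j ≠ k → ∑ i, H1 i j * H1 i k = 0)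
    (h2ent : ∀ i j, H2 i j = 1 ∨ H2 i j = -1)
    (h2orth : ∀ j k, j ≠ k → ∑ i, H2 i j * H2 i k = 0)
    (hineq : ¬ CHMEquiv (H1.map fun x => (x : ℂ)) (H2.map fun x => (x : ℂ)))
    (g : Fin m × Bool → Fin d) (hg : Function.Injective g)
    (M : (Fin m → ℝ) → Matrix (Fin d) (Fin d) ℂ)
    (hM1 : ∀ (ξ : Fin m → ℝ) (j k : Fin d),
      (∀ a b, g (a, b) ≠ k) → M ξ j k = (H1 j k : ℂ))
    (hM2 : ∀ (ξ : Fin m → ℝ) (j : Fin d) (a : Fin m) (b : Bool),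
      M ξ j (g (a, b)) =
        Complex.exp (Complex.I * ((H1 j (g (a, false)) * H1 j (g (a, true)) : ℝ) : ℂ)
            * (ξ a : ℂ)) * ((H1 j (g (a, b)) : ℝ) : ℂ)) :
    ∀ ξ : Fin m → ℝ, ¬ CHMEquiv (M ξ) (H2.map fun x => (x : ℂ)) :=
  inequivalent_real_hadamard_families_general d m H1 H2 h1ent h1orth h2ent hineq g hg M hM1 hM2
end

section
/- For d even, the matrix F_d(ξ⃗) = F_d ∘ Exp(iR(ξ⃗)), where R_{i,j} = ξ_{(j mod d/2) - 1} when i is odd and j mod (d/2) ≠ 0, and R_{i,j} = 0 otherwise, is a complex Hadamard matrix for all (ξ_1,...,ξ_{d/2-1}) ∈ ℝ^{d/2-1}. -/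
open Complex Finset

open scoped Real

theorem sum_range_exp_eq_zero {n : ℕ} {a : ℤ} (h : ¬ (n : ℤ) ∣ a) :
    ∑ i ∈ range n, exp (2 * π * I * a * i / n) = 0 := by
  rcases eq_or_ne n 0 with rfl | hn
  · simp
  have hζ := isPrimitiveRoot_exp n hn
  have hpow : ∀ i : ℕ, exp (2 * π * I * a * i / n) = (exp (2 * π * I / n) ^ a) ^ i := by
    intro i
    rw [← exp_int_mul, ← exp_nat_mul]
    ring_nf
  have hζ1 : exp (2 * π * I / n) ^ a ≠ 1 := fun h1 => h ((hζ.zpow_eq_one_iff_dvd a).mp h1)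
  have hζn : (exp (2 * π * I / n) ^ a) ^ n = 1 := by
    rw [← zpow_natCast, ← zpow_mul, hζ.zpow_eq_one_iff_dvd]
    exact dvd_mul_left _ _
  simp only [hpow, geom_sum_eq hζ1, hζn, sub_self, zero_div]

theorem sum_range_mul_eq_sum_sum {M : Type*} [AddCommMonoid M] (f : ℕ → M) (p m : ℕ) :
    ∑ i ∈ range (p * m), f i = ∑ t ∈ range m, ∑ s ∈ range p, f (p * t + s) := by
  induction m with
  | zero => simp
  | succ m ih => rw [Nat.mul_succ, sum_range_add, ih, sum_range_succ]

theorem sum_range_exp_mul_eq_zero_of_periodic {p m : ℕ} {a : ℤ} (ha : ¬ (m : ℤ) ∣ a)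
    (c : ℕ → ℂ) (hc : ∀ i, c i = c (i % p)) :
    ∑ i ∈ range (p * m), exp (2 * π * I * a * i / (p * m : ℕ)) * c i = 0 := by
  rcases eq_or_ne p 0 with rfl | hp
  · simp
  have hsplit : ∀ t s, exp (2 * π * I * a * (p * t + s : ℕ) / (p * m : ℕ)) * c (p * t + s) =
      exp (2 * π * I * a * t / m) * (exp (2 * π * I * a * s / (p * m : ℕ)) * c s) := by
    intro t s
    rw [hc (p * t + s), Nat.mul_add_mod, ← hc, mul_left_comm, ← mul_assoc, ← Complex.exp_add]
    congr 2
    push_cast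
    field_simp
    ring
  simp only [sum_range_mul_eq_sum_sum, hsplit, ← mul_sum, ← sum_mul, sum_range_exp_eq_zero ha,
    zero_mul]

noncomputable def fourierPhased (d : ℕ) (φ : ℕ → ℕ → ℝ) : Matrix (Fin d) (Fin d) ℂ :=
  fun i j => exp (2 * π * I * (i : ℕ) * (j : ℕ) / d) * exp (I * φ i j)

theorem norm_fourierPhased (d : ℕ) (φ : ℕ → ℕ → ℝ) (i j : Fin d) :
    ‖fourierPhased d φ i j‖ = 1 := by
  simp [fourierPhased, norm_exp]

theorem conj_fourierPhased_mul (d : ℕ) (φ : ℕ → ℕ → ℝ) (i j k : Fin d) :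
    starRingEnd ℂ (fourierPhased d φ i j) * fourierPhased d φ i k =
      exp (2 * π * I * ((k : ℕ) - (j : ℕ) : ℤ) * (i : ℕ) / d) *
        exp (I * (φ i k - φ i j : ℝ)) := by
  simp only [fourierPhased, map_mul, ← exp_conj, map_div₀, conj_I, conj_ofReal, map_ofNat,
    conj_natCast]
  simp only [← Complex.exp_add]
  congr 1
  push_cast
  ring

theorem isCHM_fourierPhased {p m : ℕ} (φ : ℕ → ℕ → ℝ)
    (hφ : ∀ i j, φ i j = φ (i % p) (j % m)) :
    IsCHM (fourierPhased (p * m) φ) := by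
  refine ⟨norm_fourierPhased _ φ, fun j k hjk => ?_⟩
  simp only [conj_fourierPhased_mul]
  rw [Fin.sum_univ_eq_sum_range
    (fun i : ℕ => exp (2 * π * I * _ * i / _) * exp (I * (φ i k - φ i j : ℝ)))]
  by_cases hm : (m : ℤ) ∣ (k : ℕ) - (j : ℕ)
  · have hmod : (j : ℕ) % m = (k : ℕ) % m := Nat.modEq_iff_dvd.mpr hm
    have hphase : ∀ i, φ i k = φ i j := fun i => by rw [hφ i k, hφ i j, hmod]
    have hd : ¬ ((p * m : ℕ) : ℤ) ∣ (k : ℕ) - (j : ℕ) := fun hdvd => hjk <| by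
      have := Int.eq_zero_of_abs_lt_dvd hdvd (by rw [abs_lt]; omega)
      omega
    simpa only [hphase, sub_self, ofReal_zero, mul_zero, exp_zero, mul_one]
      using sum_range_exp_eq_zero hd
  · refine sum_range_exp_mul_eq_zero_of_periodic hm _ fun i => ?_
    rw [hφ i k, hφ i j, hφ (i % p) k, hφ (i % p) j, Nat.mod_mod]

theorem fourier_family_even_dim_general (d m : ℕ) (hd : d = 2 * m)
    (ξ : ℕ → ℝ) (M : Matrix (Fin d) (Fin d) ℂ)
    (hM : ∀ i j : Fin d, M i j =
      Complex.exp (2 * Real.pi * Complex.I * (i : ℕ) * (j : ℕ) / d) *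
      Complex.exp (Complex.I *
        ((if (i : ℕ) % 2 = 1 ∧ (j : ℕ) % m ≠ 0 then ξ ((j : ℕ) % m - 1) else 0 : ℝ) : ℂ))) :
    IsCHM M := by
  subst hd
  rw [show M = fourierPhased (2 * m) fun i j => if i % 2 = 1 ∧ j % m ≠ 0 then ξ (j % m - 1) else 0
    from Matrix.ext hM]
  exact isCHM_fourierPhased _ fun i j => by simp only [Nat.mod_mod]

/-- for even `d = 2m`, the matrix `F_d ∘ Exp(iR(ξ))`, where
`R_{i,j} = ξ_{(j mod m) - 1}` when `i` is odd and `j mod m ≠ 0`, and `R_{i,j} = 0`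
otherwise, is a complex Hadamard matrix for all real parameters `ξ₁, …, ξ_{m-1}`. -/
theorem fourier_family_even_dim (d m : ℕ) (hd : d = 2 * m) (hm : 0 < m)
    (ξ : ℕ → ℝ) (M : Matrix (Fin d) (Fin d) ℂ)
    (hM : ∀ i j : Fin d, M i j =
      Complex.exp (2 * Real.pi * Complex.I * (i : ℕ) * (j : ℕ) / d) *
      Complex.exp (Complex.I *
        ((if (i : ℕ) % 2 = 1 ∧ (j : ℕ) % m ≠ 0 then ξ ((j : ℕ) % m - 1) else 0 : ℝ) : ℂ))) :
    IsCHM M :=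
  fourier_family_even_dim_general d m hd ξ M hM
end
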